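/- Generalization over witness variables: Suppose CS is a variant-closed constant specification and CS(V) its extension. If ⊢_{CS(V)} φ(a) where a is a witness variable, then for some basic variable y not occurring in the proof, ⊢_{CS(V)} ∀y φ(y). -/

import Mathlib

/-- Justification terms of first-order justification logic (FOLPb / FOJT45). -/
inductive JTerm : Type
  | jvar : Nat → JTerm
  | jconst : Nat → JTerm
  | app : JTerm → JTerm → JTerm
  | plus : JTerm → JTerm → JTerm
  | bang : JTerm → JTerm
  | bb : JTerm → JTerm
  | gen : Nat → JTerm → JTerm
  | quest : JTerm → JTerm
  deriving DecidableEq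

namespace JTerm

/-- Basic variables occurring as `gen` subscripts in a term. -/
def gvars : JTerm → Finset Nat
  | jvar _ => ∅
  | jconst _ => ∅
  | app t s => t.gvars ∪ s.gvars
  | plus t s => t.gvars ∪ s.gvars
  | bang t => t.gvars
  | bb t => t.gvars
  | gen x t => insert x t.gvars
  | quest t => t.gvars

end JTerm

/-- Formulas of first-order justification logic.  Individual "variables" are either
basic variables (`Sum.inl n`, which may be quantified and appear as `gen` subscripts)
or extra constants from `V` (witness variables / domain members), which are never
quantified. -/
inductive Fml (V : Type) : Type
  | atom : Nat → List (Nat ⊕ V) → Fml V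
  | bot : Fml V
  | imp : Fml V → Fml V → Fml V
  | all : Nat → Fml V → Fml V
  | box : JTerm → Finset (Nat ⊕ V) → Fml V → Fml V

namespace Fml

variable {V : Type} [DecidableEq V]

def neg (φ : Fml V) : Fml V := φ.imp .bot
def orr (φ ψ : Fml V) : Fml V := φ.neg.imp ψ
def andd (φ ψ : Fml V) : Fml V := (φ.imp ψ.neg).neg
def ex (x : Nat) (φ : Fml V) : Fml V := (Fml.all x φ.neg).neg

/-- Free individual variables.  Following the paper, `fv (t :_X φ) = X`. -/
def fv : Fml V → Finset (Nat ⊕ V)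
  | atom _ l => l.toFinset
  | bot => ∅
  | imp φ ψ => φ.fv ∪ ψ.fv
  | all x φ => φ.fv \ {Sum.inl x}
  | box _ X _ => X

/-- Substitution of `e` for the free occurrences of the individual variable `x`. -/
def subst (x e : Nat ⊕ V) : Fml V → Fml V
  | atom P l => atom P (l.map fun v => if v = x then e else v)
  | bot => bot
  | imp φ ψ => imp (subst x e φ) (subst x e ψ)
  | all y φ => if x = Sum.inl y then all y φ else all y (subst x e φ)
  | box t X φ =>
      if x ∈ X then box t (X.image fun v => if v = x then e else v) (subst x e φ)
      else box t X φ

/-- `e` is free for `x` in the given formula. -/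
def freeFor (e x : Nat ⊕ V) : Fml V → Prop
  | atom _ _ => True
  | bot => True
  | imp φ ψ => freeFor e x φ ∧ freeFor e x ψ
  | all y φ => x ∉ (Fml.all y φ).fv ∨ (e ≠ Sum.inl y ∧ freeFor e x φ)
  | box _ X φ => freeFor e x φ ∧ (e ∈ φ.fv → e ∈ X)

/-- All individual variables occurring in a formula (free, bound, in subscripts,
or as `gen` subscripts of justification terms). -/
def allVars : Fml V → Finset (Nat ⊕ V)
  | atom _ l => l.toFinset
  | bot => ∅
  | imp φ ψ => φ.allVars ∪ ψ.allVars
  | all x φ => insert (Sum.inl x) φ.allVars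
  | box t X φ => X ∪ t.gvars.image Sum.inl ∪ φ.allVars

/-- The set of witness variables / domain constants (`Sum.inr`-variables) occurring
in a formula. -/
def wvars (φ : Fml V) : Finset (Nat ⊕ V) := φ.allVars.filter fun v => v.isRight

/-- Free basic variables. -/
def fbv (φ : Fml V) : Finset Nat :=
  φ.fv.biUnion fun v => match v with | Sum.inl n => {n} | Sum.inr _ => ∅

/-- Universal closure (over the free basic variables). -/
noncomputable def close (φ : Fml V) : Fml V := φ.fbv.toList.foldr Fml.all φ

/-- Renaming of the free individual variables of a formula. -/
def renameFree (ρ : (Nat ⊕ V) → (Nat ⊕ V)) : Fml V → Fml V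
  | atom P l => atom P (l.map ρ)
  | bot => bot
  | imp φ ψ => imp (renameFree ρ φ) (renameFree ρ ψ)
  | all y φ => all y (renameFree (Function.update ρ (Sum.inl y) (Sum.inl y)) φ)
  | box t X φ => box t (X.image ρ) (renameFree (fun v => if v ∈ X then ρ v else v) φ)

/-- Replacement of *every* occurrence of the individual variable `a` by `e`
(used for witness variables, which are never bound). -/
def replaceAll (a e : Nat ⊕ V) : Fml V → Fml V
  | atom P l => atom P (l.map fun v => if v = a then e else v)
  | bot => bot
  | imp φ ψ => imp (replaceAll a e φ) (replaceAll a e ψ)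
  | all x φ => all x (replaceAll a e φ)
  | box t X φ => box t (X.image fun v => if v = a then e else v) (replaceAll a e φ)

/-- Change the type of extra constants. -/
def vmap {V' : Type} [DecidableEq V'] (f : V → V') : Fml V → Fml V'
  | atom P l => atom P (l.map (Sum.map id f))
  | bot => bot
  | imp φ ψ => imp (vmap f φ) (vmap f ψ)
  | all x φ => all x (vmap f φ)
  | box t X φ => box t (X.image (Sum.map id f)) (vmap f φ)

def size : Fml V → Nat
  | atom _ _ => 1
  | bot => 1
  | imp φ ψ => φ.size + ψ.size + 1
  | all _ φ => φ.size + 1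
  | box _ _ φ => φ.size + 1

/-- Simultaneous substitution of all free basic variables. -/
def instAll (σ : Nat → Nat ⊕ V) : Fml V → Fml V
  | atom P l => atom P (l.map fun v => match v with | Sum.inl n => σ n | w => w)
  | bot => bot
  | imp φ ψ => imp (instAll σ φ) (instAll σ ψ)
  | all x φ => all x (instAll (Function.update σ x (Sum.inl x)) φ)
  | box t X φ =>
      box t (X.image fun v => match v with | Sum.inl n => σ n | w => w)
        (instAll (fun n => if Sum.inl n ∈ X then σ n else Sum.inl n) φ)

theorem size_subst (x e : Nat ⊕ V) : ∀ φ : Fml V, (φ.subst x e).size = φ.size := by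
  intro φ
  induction φ with
  | atom P l => simp [subst, size]
  | bot => simp [subst, size]
  | imp φ ψ ihφ ihψ => simp [subst, size, ihφ, ihψ]
  | all y φ ih => by_cases h : x = Sum.inl y <;> simp [subst, size, h, ih]
  | box t X φ ih => by_cases h : x ∈ X <;> simp [subst, size, h, ih]

theorem size_instAll : ∀ (φ : Fml V) (σ : Nat → Nat ⊕ V), (φ.instAll σ).size = φ.size := by
  intro φ
  induction φ with
  | atom P l => intro σ; simp [instAll, size]
  | bot => intro σ; simp [instAll, size]
  | imp φ ψ ihφ ihψ => intro σ; simp [instAll, size, ihφ, ihψ]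
  | all y φ ih => intro σ; simp [instAll, size, ih]
  | box t X φ ih => intro σ; simp [instAll, size, ih]

end Fml

/-- The two logics considered in the paper. -/
inductive Logic : Type
  | folpb
  | fojt45

/-- Axioms of the systems: **A1** (a standard Hilbert axiomatization of classical
first-order logic), **A2**, **A3**, **B1**–**B5**, together with the Barcan axiom
**Bb** (for FOLPb only) and negative introspection **B6** (for FOJT45 only). -/
inductive IsAxiom {V : Type} [DecidableEq V] : Logic → Fml V → Prop
  | a1k (L) (φ ψ : Fml V) : IsAxiom L (φ.imp (ψ.imp φ))
  | a1s (L) (φ ψ χ : Fml V) :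
      IsAxiom L ((φ.imp (ψ.imp χ)).imp ((φ.imp ψ).imp (φ.imp χ)))
  | a1dne (L) (φ : Fml V) : IsAxiom L (φ.neg.neg.imp φ)
  | a1inst (L) (x : Nat) (e : Nat ⊕ V) (φ : Fml V) (h : φ.freeFor e (Sum.inl x)) :
      IsAxiom L ((Fml.all x φ).imp (φ.subst (Sum.inl x) e))
  | a1allImp (L) (x : Nat) (φ ψ : Fml V) :
      IsAxiom L ((Fml.all x (φ.imp ψ)).imp ((Fml.all x φ).imp (Fml.all x ψ)))
  | a1vac (L) (x : Nat) (φ : Fml V) (h : Sum.inl x ∉ φ.fv) :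
      IsAxiom L (φ.imp (Fml.all x φ))
  | a2 (L) (t : JTerm) (X : Finset (Nat ⊕ V)) (y : Nat ⊕ V) (φ : Fml V)
      (h : y ∉ φ.fv) :
      IsAxiom L ((Fml.box t (insert y X) φ).imp (Fml.box t X φ))
  | a3 (L) (t : JTerm) (X : Finset (Nat ⊕ V)) (y : Nat ⊕ V) (φ : Fml V) :
      IsAxiom L ((Fml.box t X φ).imp (Fml.box t (insert y X) φ))
  | b1 (L) (t : JTerm) (X : Finset (Nat ⊕ V)) (φ : Fml V) :
      IsAxiom L ((Fml.box t X φ).imp φ)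
  | b2 (L) (t s : JTerm) (X : Finset (Nat ⊕ V)) (φ ψ : Fml V) :
      IsAxiom L ((Fml.box t X (φ.imp ψ)).imp
        ((Fml.box s X φ).imp (Fml.box (t.app s) X ψ)))
  | b3l (L) (t s : JTerm) (X : Finset (Nat ⊕ V)) (φ : Fml V) :
      IsAxiom L ((Fml.box t X φ).imp (Fml.box (t.plus s) X φ))
  | b3r (L) (t s : JTerm) (X : Finset (Nat ⊕ V)) (φ : Fml V) :
      IsAxiom L ((Fml.box s X φ).imp (Fml.box (t.plus s) X φ))
  | b4 (L) (t : JTerm) (X : Finset (Nat ⊕ V)) (φ : Fml V) :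
      IsAxiom L ((Fml.box t X φ).imp (Fml.box t.bang X (Fml.box t X φ)))
  | b5 (L) (t : JTerm) (X : Finset (Nat ⊕ V)) (x : Nat) (φ : Fml V)
      (h : Sum.inl x ∉ X) :
      IsAxiom L ((Fml.box t X φ).imp (Fml.box (t.gen x) X (Fml.all x φ)))
  | bb (t : JTerm) (X : Finset (Nat ⊕ V)) (y : Nat) (φ : Fml V)
      (h : Sum.inl y ∉ X) :
      IsAxiom Logic.folpb
        ((Fml.all y (Fml.box t (insert (Sum.inl y) X) φ)).imp
          (Fml.box t.bb X (Fml.all y φ)))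
  | b6 (t : JTerm) (X : Finset (Nat ⊕ V)) (φ : Fml V) :
      IsAxiom Logic.fojt45
        ((Fml.box t X φ).neg.imp (Fml.box t.quest X (Fml.box t X φ).neg))

/-- Derivability from a set `Γ` of assumptions, with extra axioms from the constant
specification `CS`; generalization is only applied to variables not free in `Γ`. -/
inductive Deriv {V : Type} [DecidableEq V] (L : Logic) (CS : Set (Fml V))
    (Γ : Set (Fml V)) : Fml V → Prop
  | ax {φ : Fml V} : IsAxiom L φ → Deriv L CS Γ φ
  | cs {φ : Fml V} : φ ∈ CS → Deriv L CS Γ φ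
  | hyp {φ : Fml V} : φ ∈ Γ → Deriv L CS Γ φ
  | mp {φ ψ : Fml V} : Deriv L CS Γ (φ.imp ψ) → Deriv L CS Γ φ → Deriv L CS Γ ψ
  | genR {φ : Fml V} {x : Nat} : Deriv L CS Γ φ →
      (∀ ψ ∈ Γ, Sum.inl x ∉ ψ.fv) → Deriv L CS Γ (Fml.all x φ)

/-- `CS` is a constant specification: each member has the form `c : ψ` with `ψ` an axiom. -/
def IsCS {V : Type} [DecidableEq V] (L : Logic) (CS : Set (Fml V)) : Prop :=
  ∀ χ ∈ CS, ∃ (c : Nat) (φ : Fml V),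
    χ = Fml.box (JTerm.jconst c) ∅ φ ∧ IsAxiom L φ

/-- `CS` is axiomatically appropriate. -/
def AxAppropriate {V : Type} [DecidableEq V] (L : Logic) (CS : Set (Fml V)) : Prop :=
  ∀ φ : Fml V, IsAxiom L φ → ∃ c : Nat, Fml.box (JTerm.jconst c) ∅ φ ∈ CS

def Consistent {V : Type} [DecidableEq V] (L : Logic) (CS Γ : Set (Fml V)) : Prop :=
  ¬ Deriv L CS Γ Fml.bot

def MaxConsistent {V : Type} [DecidableEq V] (L : Logic) (CS Γ : Set (Fml V)) : Prop :=
  Consistent L CS Γ ∧ ∀ Δ : Set (Fml V), Γ ⊆ Δ → Consistent L CS Δ → Δ = Γ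

/-- Formulas of the basic language (no witness variables). -/
abbrev FmlB := Fml Empty

/-- Henkin formulas: formulas possibly containing witness variables (`Sum.inr`). -/
abbrev FmlW := Fml Nat

/-- A basic-language formula regarded as a Henkin formula. -/
def liftB : FmlB → FmlW := Fml.vmap fun e => e.elim

/-- A Henkin formula containing no witness variables. -/
def NoWitness (φ : FmlW) : Prop := ∀ v ∈ φ.allVars, v.isLeft = true

/-- Two formulas are variable variants: one is obtained from the other by a
bijective renaming of free individual variables. -/
def VarVariant {V : Type} [DecidableEq V] (φ ψ : Fml V) : Prop :=
  ∃ ρ : (Nat ⊕ V) → (Nat ⊕ V), Function.Bijective ρ ∧ ψ = Fml.renameFree ρ φ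

/-- A constant specification is variant closed. -/
def VariantClosed {V : Type} [DecidableEq V] (CS : Set (Fml V)) : Prop :=
  ∀ (φ ψ : Fml V) (c : Nat), VarVariant φ ψ →
    (Fml.box (JTerm.jconst c) ∅ φ ∈ CS ↔ Fml.box (JTerm.jconst c) ∅ ψ ∈ CS)

/-- The extension `CS(V)` of a basic constant specification to the language with
witness variables: justified axioms with some free basic variables replaced by
distinct witness variables. -/
def CSV (CS : Set FmlB) : Set FmlW :=
  {χ | ∃ (c : Nat) (φ : FmlB) (ρ : (Nat ⊕ Nat) → (Nat ⊕ Nat)),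
    Fml.box (JTerm.jconst c) ∅ φ ∈ CS ∧
    Function.Injective ρ ∧
    (∀ m : Nat, ρ (Sum.inr m) = Sum.inr m) ∧
    (∀ n : Nat, ρ (Sum.inl n) = Sum.inl n ∨ ∃ m : Nat, ρ (Sum.inl n) = Sum.inr m) ∧
    χ = Fml.box (JTerm.jconst c) ∅ (Fml.renameFree ρ (liftB φ))}

/-- `Γ^#`. -/
def sharp (Γ : Set FmlW) : Set FmlW :=
  {χ | ∃ (t : JTerm) (X : Finset (Nat ⊕ Nat)) (φ : FmlW),
    Fml.box t X φ ∈ Γ ∧ (Fml.box t X φ : FmlW).fbv = ∅ ∧ X = φ.wvars ∧ χ = φ.close}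

/-! ### Templates -/

inductive Tmpl : Type
  | pvar : Nat → Tmpl
  | neg : Tmpl → Tmpl
  | orr : Tmpl → Tmpl → Tmpl
  | andd : Tmpl → Tmpl → Tmpl
  | box : Tmpl → Tmpl

namespace Tmpl

def letters : Tmpl → Multiset Nat
  | pvar i => {i}
  | neg G => G.letters
  | orr G H => G.letters + H.letters
  | andd G H => G.letters + H.letters
  | box G => G.letters

/-- No propositional letter occurs more than once. -/
def IsTemplate (F : Tmpl) : Prop := F.letters.Nodup

def Positive : Tmpl → Prop
  | pvar _ => True
  | neg _ => False
  | orr G H => G.Positive ∧ H.Positive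
  | andd G H => G.Positive ∧ H.Positive
  | box G => G.Positive

def Disjunctive : Tmpl → Prop
  | pvar _ => True
  | neg _ => False
  | orr G H => G.Disjunctive ∧ H.Disjunctive
  | andd _ _ => False
  | box G => G.Disjunctive

end Tmpl

/-- The instantiation set `⟦F(φ⃗)⟧`, where the valuation `v` gives the Henkin formula
substituted for each propositional letter. -/
inductive Inst (v : Nat → FmlW) : Tmpl → FmlW → Prop
  | pvar (i : Nat) : Inst v (Tmpl.pvar i) (v i)
  | neg {G : Tmpl} {ψ : FmlW} : Inst v G ψ → Inst v (Tmpl.neg G) ψ.neg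
  | orr {G H : Tmpl} {ψ θ : FmlW} :
      Inst v G ψ → Inst v H θ → Inst v (Tmpl.orr G H) (ψ.orr θ)
  | andd {G H : Tmpl} {ψ θ : FmlW} :
      Inst v G ψ → Inst v H θ → Inst v (Tmpl.andd G H) (ψ.andd θ)
  | box {G : Tmpl} {ψ : FmlW} (t : JTerm) :
      Inst v G ψ → Inst v (Tmpl.box G) (Fml.box t ψ.wvars ψ)

/-- The set of negations of members of `⟦F(φ⃗)⟧`. -/
def NegInst (v : Nat → FmlW) (F : Tmpl) : Set FmlW :=
  {χ | ∃ ψ : FmlW, Inst v F ψ ∧ χ = ψ.neg}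

/-- `Δ` admits instantiation (relative to the basic constant specification `CS`). -/
def AdmitsInst (CS : Set FmlB) (Δ : Set FmlW) : Prop :=
  ∀ F : Tmpl, F.IsTemplate → F.Disjunctive →
    ∀ (v : Nat → FmlW) (q x : Nat) (φ : FmlW),
      Consistent Logic.folpb (CSV CS)
        (Δ ∪ NegInst (Function.update v q (Fml.all x φ)) F) →
      ∃ a : Nat,
        Consistent Logic.folpb (CSV CS)
          (Δ ∪ NegInst (Function.update v q (φ.subst (Sum.inl x) (Sum.inr a))) F)

/-! ### Fitting models -/

/-- A Fitting model for FOLPb with constant domain `D`. -/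
structure FModel (D : Type) [DecidableEq D] where
  W : Type
  nonempty : Nonempty W
  R : W → W → Prop
  refl : ∀ w, R w w
  trans : ∀ {u v w}, R u v → R v w → R u w
  I : Nat → W → List D → Prop
  E : JTerm → Fml D → Set W
  condApp : ∀ (t s : JTerm) (φ ψ : Fml D), E t (φ.imp ψ) ∩ E s φ ⊆ E (t.app s) ψ
  condPlus : ∀ (t s : JTerm) (φ : Fml D), E t φ ∪ E s φ ⊆ E (t.plus s) φ
  condBang : ∀ (t : JTerm) (φ : Fml D) (X : Finset (Nat ⊕ D)),
    (∀ x ∈ X, x.isRight = true) → φ.wvars ⊆ X →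
    E t φ ⊆ E t.bang (Fml.box t X φ)
  condClosure : ∀ (t : JTerm) (φ : Fml D) {w w'},
    w ∈ E t φ → R w w' → w' ∈ E t φ
  condInst : ∀ (t : JTerm) (φ : Fml D) (x : Nat) (a : D) {w},
    w ∈ E t φ → w ∈ E t (φ.subst (Sum.inl x) (Sum.inr a))
  condGen : ∀ (t : JTerm) (φ : Fml D) (x : Nat), E t φ ⊆ E (t.gen x) (Fml.all x φ)
  condB : ∀ (t : JTerm) (φ : Fml D) (y : Nat) {w},
    (∀ a : D, w ∈ E t (φ.subst (Sum.inl y) (Sum.inr a))) →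
    w ∈ E t.bb (Fml.all y φ)

/-- Truth of a (closed) `D`-formula at a world. -/
def Truth {D : Type} [DecidableEq D] (M : FModel D) : M.W → Fml D → Prop
  | w, .atom P l => ∃ ds : List D, l = ds.map Sum.inr ∧ M.I P w ds
  | _, .bot => False
  | w, .imp φ ψ => Truth M w φ → Truth M w ψ
  | w, .all x φ => ∀ a : D, Truth M w (φ.subst (Sum.inl x) (Sum.inr a))
  | w, .box t _ φ => w ∈ M.E t φ ∧
      ∀ w', M.R w w' → ∀ σ : Nat → Nat ⊕ D, (∀ n, ∃ a : D, σ n = Sum.inr a) →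
        Truth M w' (φ.instAll σ)
  termination_by _ φ => φ.size
  decreasing_by
    all_goals simp [Fml.size, Fml.size_subst, Fml.size_instAll]
    all_goals omega

/-- A basic-language formula as a `D`-formula. -/
def toD {D : Type} [DecidableEq D] : FmlB → Fml D := Fml.vmap fun e => e.elim

/-- Validity in a model: the universal closure is true at every world. -/
def Valid {D : Type} [DecidableEq D] (M : FModel D) (φ : FmlB) : Prop :=
  ∀ w : M.W, Truth M w (toD φ.close)

/-- The model meets the constant specification `CS`. -/
def Meets {D : Type} [DecidableEq D] (M : FModel D) (CS : Set FmlB) : Prop :=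
  ∀ (c : Nat) (φ : FmlB), Fml.box (JTerm.jconst c) ∅ φ ∈ CS →
    ∀ w : M.W, w ∈ M.E (JTerm.jconst c) (toD φ)

/-!
Replacing the witness variable `a` by a basic variable `y` that occurs nowhere commutes with
substitution, free variables and the "free for" condition, so it sends instances of the axiom
schemes to instances of the same schemes for all but finitely many `y`; members of `CSV CS`
contain no witness variables and are left unchanged. Since the derivation has no assumptions,
generalization steps are unrestricted, and induction on the derivation shows that `φ(y)` is
derivable for cofinitely many `y`. Pick such a `y` not occurring in `φ` and generalize.
-/

theorem eventually_inl_notMem {V : Type} (s : Finset (Nat ⊕ V)) :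
    ∀ᶠ y : Nat in Filter.cofinite, .inl y ∉ s :=
  Filter.eventually_cofinite.2 <| by
    simp only [not_not]; exact s.finite_toSet.preimage Sum.inl_injective.injOn

namespace Fml

variable {V : Type} [DecidableEq V]

def replaceVar (a e : Nat ⊕ V) (v : Nat ⊕ V) : Nat ⊕ V := if v = a then e else v

@[simp] theorem replaceAll_atom (a e : Nat ⊕ V) (P : Nat) (l : List (Nat ⊕ V)) :
    (atom P l).replaceAll a e = atom P (l.map (replaceVar a e)) := rfl

@[simp] theorem replaceAll_imp (a e : Nat ⊕ V) (φ ψ : Fml V) :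
    (φ.imp ψ).replaceAll a e = (φ.replaceAll a e).imp (ψ.replaceAll a e) := rfl

@[simp] theorem replaceAll_all (a e : Nat ⊕ V) (x : Nat) (φ : Fml V) :
    (all x φ).replaceAll a e = all x (φ.replaceAll a e) := rfl

@[simp] theorem replaceAll_box (a e : Nat ⊕ V) (t : JTerm) (X : Finset (Nat ⊕ V)) (φ : Fml V) :
    (box t X φ).replaceAll a e = box t (X.image (replaceVar a e)) (φ.replaceAll a e) := rfl

theorem fv_subset_allVars (φ : Fml V) : φ.fv ⊆ φ.allVars := by
  induction φ with
  | atom | bot => simp [fv, allVars]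
  | imp φ ψ ihφ ihψ => exact Finset.union_subset_union ihφ ihψ
  | all x φ ih => exact Finset.sdiff_subset.trans (ih.trans (Finset.subset_insert _ _))
  | box t X φ => simp [fv, allVars, Finset.union_assoc]

theorem renameFree_id (φ : Fml V) : φ.renameFree id = φ := by
  induction φ with
  | atom => simp [renameFree]
  | bot => rfl
  | imp φ ψ ihφ ihψ => simp [renameFree, ihφ, ihψ]
  | all x φ ih =>
    have hupd : Function.update (id : Nat ⊕ V → Nat ⊕ V) (.inl x) (.inl x) = id :=
      Function.update_eq_self _ _
    simp [renameFree, hupd, ih]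
  | box t X φ ih =>
    have hid : (fun v => if v ∈ X then id v else v) = id := funext fun v => by simp
    rw [renameFree, Finset.image_id, hid, ih]

section Witness

variable {a : V} {y : Nat}

@[simp] theorem replaceVar_inl (n : Nat) : replaceVar (.inr a) (.inl y) (.inl n) = .inl n := by
  simp [replaceVar]

theorem replaceVar_eq_inl_iff {x : Nat} (hxy : x ≠ y) (v : Nat ⊕ V) :
    replaceVar (.inr a) (.inl y) v = .inl x ↔ v = .inl x := by
  unfold replaceVar; split_ifs with h <;> simp [h, Ne.symm hxy]

theorem replaceVar_injOn :
    Set.InjOn (replaceVar (.inr a) (.inl y)) {v : Nat ⊕ V | v ≠ .inl y} := by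
  intro u hu v hv huv
  simp only [replaceVar] at huv
  split_ifs at huv <;> simp_all

theorem inl_mem_image_replaceVar_iff {x : Nat} (hxy : x ≠ y) {s : Finset (Nat ⊕ V)} :
    .inl x ∈ s.image (replaceVar (.inr a) (.inl y)) ↔ .inl x ∈ s := by
  simp [replaceVar_eq_inl_iff hxy]

theorem replaceVar_mem_image_iff {s : Finset (Nat ⊕ V)} (hs : .inl y ∉ s) {v : Nat ⊕ V}
    (hv : v ≠ .inl y) :
    replaceVar (.inr a) (.inl y) v ∈ s.image (replaceVar (.inr a) (.inl y)) ↔ v ∈ s := by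
  refine ⟨fun h => ?_, Finset.mem_image_of_mem _⟩
  obtain ⟨u, hu, huv⟩ := Finset.mem_image.1 h
  rwa [← replaceVar_injOn (ne_of_mem_of_not_mem hu hs) hv huv]

theorem fv_replaceAll {φ : Fml V} (hy : .inl y ∉ φ.allVars) :
    (φ.replaceAll (.inr a) (.inl y)).fv = φ.fv.image (replaceVar (.inr a) (.inl y)) := by
  induction φ with
  | atom P l => ext; simp [fv]
  | bot => rfl
  | imp φ ψ ihφ ihψ =>
    simp only [allVars, Finset.mem_union, not_or] at hy
    simp [fv, ihφ hy.1, ihψ hy.2, Finset.image_union]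
  | all x φ ih =>
    simp only [allVars, Finset.mem_insert, not_or, Sum.inl.injEq] at hy
    ext v
    simp only [replaceAll_all, fv, ih hy.2, Finset.mem_sdiff, Finset.mem_image,
      Finset.mem_singleton]
    constructor
    · rintro ⟨⟨u, hu, rfl⟩, hne⟩
      exact ⟨u, ⟨hu, fun h => hne (by rw [h, replaceVar_inl])⟩, rfl⟩
    · rintro ⟨u, ⟨hu, hne⟩, rfl⟩
      exact ⟨⟨u, hu, rfl⟩, fun h => hne ((replaceVar_eq_inl_iff (Ne.symm hy.1) u).1 h)⟩
  | box t X φ => rfl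

theorem replaceAll_subst {x : Nat} (hxy : x ≠ y) (e : Nat ⊕ V) (φ : Fml V) :
    (φ.subst (.inl x) e).replaceAll (.inr a) (.inl y)
      = (φ.replaceAll (.inr a) (.inl y)).subst (.inl x) (replaceVar (.inr a) (.inl y) e) := by
  have hvar : ∀ v : Nat ⊕ V, replaceVar (.inr a) (.inl y) (if v = .inl x then e else v)
      = if replaceVar (.inr a) (.inl y) v = .inl x then replaceVar (.inr a) (.inl y) e
        else replaceVar (.inr a) (.inl y) v := by
    intro v
    simp only [replaceVar_eq_inl_iff hxy]
    split_ifs <;> rfl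
  induction φ with
  | atom P l => simp [subst, hvar]
  | bot => rfl
  | imp φ ψ ihφ ihψ => simp [subst, ihφ, ihψ]
  | all z φ ih => by_cases hxz : x = z <;> simp [subst, hxz, ih]
  | box t X φ ih =>
    by_cases hX : .inl x ∈ X
    · simp [subst, hX, inl_mem_image_replaceVar_iff hxy, ih, Finset.image_image,
        Function.comp_def, hvar]
    · simp [subst, hX, inl_mem_image_replaceVar_iff hxy]

theorem freeFor_replaceAll {x : Nat} {e : Nat ⊕ V} (hxy : x ≠ y) (hey : e ≠ .inl y)
    {φ : Fml V} (hy : .inl y ∉ φ.allVars) (h : φ.freeFor e (.inl x)) :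
    (φ.replaceAll (.inr a) (.inl y)).freeFor (replaceVar (.inr a) (.inl y) e) (.inl x) := by
  induction φ with
  | atom | bot => trivial
  | imp φ ψ ihφ ihψ =>
    simp only [allVars, Finset.mem_union, not_or] at hy
    exact ⟨ihφ hy.1 h.1, ihψ hy.2 h.2⟩
  | all z φ ih =>
    rcases h with hx | ⟨hez, hf⟩
    · left
      rwa [← replaceAll_all, fv_replaceAll hy, inl_mem_image_replaceVar_iff hxy]
    · simp only [allVars, Finset.mem_insert, not_or, Sum.inl.injEq] at hy
      refine Or.inr ⟨?_, ih hy.2 hf⟩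
      unfold replaceVar
      split_ifs <;> simp_all
  | box t X φ ih =>
    simp only [allVars, Finset.mem_union, not_or] at hy
    refine ⟨ih hy.2 h.1, fun he => Finset.mem_image_of_mem _ (h.2 ?_)⟩
    rwa [fv_replaceAll hy.2,
      replaceVar_mem_image_iff (fun h => hy.2 (fv_subset_allVars φ h)) hey] at he

end Witness

end Fml

open Fml

theorem IsAxiom.eventually_replaceAll {V : Type} [DecidableEq V] {L : Logic} {χ : Fml V}
    (h : IsAxiom L χ) (a : V) :
    ∀ᶠ y in Filter.cofinite, IsAxiom L (χ.replaceAll (.inr a) (.inl y)) := by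
  have hfresh := eventually_inl_notMem χ.allVars
  cases h with
  | a1inst L x e φ hf =>
    filter_upwards [hfresh, eventually_inl_notMem {e}] with y hy hey
    have hxy : x ≠ y := fun h => hy (by simp [h, allVars])
    have hyφ : .inl y ∉ φ.allVars := fun h => hy (by simp [h, allVars])
    rw [replaceAll_imp, replaceAll_all, replaceAll_subst hxy]
    exact .a1inst L x _ _ (freeFor_replaceAll hxy (by simpa [eq_comm] using hey) hyφ hf)
  | a1vac L x φ hx =>
    filter_upwards [hfresh] with y hy
    have hxy : x ≠ y := fun h => hy (by simp [h, allVars])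
    have hyφ : .inl y ∉ φ.allVars := fun h => hy (by simp [h, allVars])
    refine .a1vac L x _ ?_
    rwa [fv_replaceAll hyφ, inl_mem_image_replaceVar_iff hxy]
  | a2 L t X w φ hw =>
    filter_upwards [hfresh] with y hy
    have hwy : w ≠ .inl y := fun h => hy (by simp [h, allVars])
    have hyφ : .inl y ∉ φ.allVars := fun h => hy (by simp [h, allVars])
    rw [replaceAll_imp, replaceAll_box, replaceAll_box, Finset.image_insert]
    refine .a2 L t _ _ _ ?_
    rwa [fv_replaceAll hyφ,
      replaceVar_mem_image_iff (fun h => hyφ (fv_subset_allVars φ h)) hwy]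
  | b5 L t X x φ hx =>
    filter_upwards [hfresh] with y hy
    have hxy : x ≠ y := fun h => hy (by simp [h, allVars, JTerm.gvars])
    exact .b5 L t _ x _ ((inl_mem_image_replaceVar_iff hxy).not.2 hx)
  | bb t X w φ hw =>
    filter_upwards [hfresh] with y hy
    have hwy : w ≠ y := fun h => hy (by simp [h, allVars])
    rw [replaceAll_imp, replaceAll_all, replaceAll_box, replaceAll_box, replaceAll_all,
      Finset.image_insert, replaceVar_inl]
    exact .bb t _ w _ ((inl_mem_image_replaceVar_iff hwy).not.2 hw)
  | _ =>
    refine .of_forall fun y => ?_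
    simp only [replaceAll_imp, replaceAll_box, Finset.image_insert]
    constructor

theorem Deriv.eventually_replaceAll {V : Type} [DecidableEq V] {L : Logic} {CS : Set (Fml V)}
    {a : V} (hCS : ∀ χ ∈ CS, ∀ᶠ y in Filter.cofinite, χ.replaceAll (.inr a) (.inl y) ∈ CS)
    {χ : Fml V} (h : Deriv L CS ∅ χ) :
    ∀ᶠ y in Filter.cofinite, Deriv L CS ∅ (χ.replaceAll (.inr a) (.inl y)) := by
  induction h with
  | ax h => exact (h.eventually_replaceAll a).mono fun _ => .ax
  | cs h => exact (hCS _ h).mono fun _ => .cs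
  | hyp h => exact absurd h (Set.notMem_empty _)
  | mp _ _ ih₁ ih₂ => exact (ih₁.and ih₂).mono fun _ h => .mp h.1 h.2
  | genR _ _ ih => exact ih.mono fun _ h => .genR h (by simp)

theorem replaceAll_liftB (a : Nat) (e : Nat ⊕ Nat) (φ : FmlB) :
    (liftB φ).replaceAll (.inr a) e = liftB φ := by
  induction φ with
  | atom => simp [liftB, vmap, replaceVar]
  | bot => rfl
  | imp φ ψ ihφ ihψ => simp_all [liftB, vmap]
  | all x φ ih => simp_all [liftB, vmap]
  | box t X φ ih =>
    have hvar : replaceVar (.inr a) e ∘ Sum.map id (fun e : Empty => e.elim) =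
        Sum.map id (fun e : Empty => e.elim) := by
      funext v; rcases v with n | e
      exacts [by simp [replaceVar], e.elim]
    simp_all [liftB, vmap, Finset.image_image]

/-- The renaming `ρ` in `CSV` is injective and fixes every witness variable, so it cannot send a
basic variable to one: it is the identity. -/
theorem replaceAll_of_mem_CSV {CS : Set FmlB} {χ : FmlW} (hχ : χ ∈ CSV CS) (a : Nat)
    (e : Nat ⊕ Nat) : χ.replaceAll (.inr a) e = χ := by
  obtain ⟨c, φ, ρ, -, hinj, hfix, hbasic, rfl⟩ := hχ
  have hρ : ρ = id := by
    funext v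
    rcases v with n | m
    · exact (hbasic n).resolve_right fun ⟨m, hm⟩ => by
        simpa using hinj (hm.trans (hfix m).symm)
    · exact hfix m
  simp [hρ, renameFree_id, replaceAll_liftB]

theorem generalization_over_witness_general (CS : Set FmlB) (φ : FmlW) (a : Nat)
    (h : Deriv Logic.folpb (CSV CS) ∅ φ) :
    ∃ y : Nat, Sum.inl y ∉ φ.allVars ∧
      Deriv Logic.folpb (CSV CS) ∅
        (Fml.all y (Fml.replaceAll (Sum.inr a) (Sum.inl y) φ)) := by
  have hCSV : ∀ χ ∈ CSV CS, ∀ᶠ y in Filter.cofinite, χ.replaceAll (.inr a) (.inl y) ∈ CSV CS :=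
    fun χ hχ => .of_forall fun y => by rwa [replaceAll_of_mem_CSV hχ]
  obtain ⟨y, hy, hφ⟩ :=
    ((eventually_inl_notMem φ.allVars).and (h.eventually_replaceAll hCSV)).exists
  exact ⟨y, hy, .genR hφ (by simp)⟩

/-- **Generalization over witness variables**: if `⊢_{CS(V)} φ(a)` for a formula
containing the witness variable `a`, then for some fresh basic variable `y`,
`⊢_{CS(V)} ∀y φ(y)`. -/
theorem generalization_over_witness (CS : Set FmlB) (hCS : IsCS Logic.folpb CS)
    (hvc : VariantClosed CS) (φ : FmlW) (a : Nat)
    (ha : Sum.inr a ∈ φ.allVars)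
    (h : Deriv Logic.folpb (CSV CS) ∅ φ) :
    ∃ y : Nat, Sum.inl y ∉ φ.allVars ∧
      Deriv Logic.folpb (CSV CS) ∅
        (Fml.all y (Fml.replaceAll (Sum.inr a) (Sum.inl y) φ)) :=
  generalization_over_witness_general CS φ a h
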